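/- (Proposition 1, support form) For any payoff matrix O : Fin m → Fin n → ℝ with m ≥ 1 and n ≥ 1, there exists an optimal mixed strategy for the row player whose support has size at most n: there is p* ∈ stdSimplex ℝ (Fin m) with min_{j ∈ Fin n} Σ_i p* i * O i j = val O and |{i : p* i ≠ 0}| ≤ n. -/

import Mathlib

/-- The column player's guaranteed (minimal) payoff against mixed row strategy `p`. -/
noncomputable def minPay {m n : ℕ} (O : Fin m → Fin n → ℝ) (p : Fin m → ℝ) : ℝ :=
  ⨅ j : Fin n, ∑ i, p i * O i j

/-- The (lower) value of the zero-sum matrix game with payoff matrix `O`. -/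
noncomputable def gameVal {m n : ℕ} (O : Fin m → Fin n → ℝ) : ℝ :=
  ⨆ p : {p : Fin m → ℝ // p ∈ stdSimplex ℝ (Fin m)}, minPay O p.1

/-- The value of the game when the row player is restricted to rows in `S`. -/
noncomputable def gameValOn {m n : ℕ} (O : Fin m → Fin n → ℝ) (S : Finset (Fin m)) : ℝ :=
  ⨆ p : {p : Fin m → ℝ // p ∈ stdSimplex ℝ (Fin m) ∧ ∀ i ∉ S, p i = 0}, minPay O p.1

/-!
Take an optimal strategy `p` whose support is minimal. If the support had more than `n` rows,
the `n + 1` coordinates `(1, O i)` of its rows would either be linearly dependent or span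
`(0, 1, …, 1)`. A dependency `c` satisfies `∑ c = 0` and `∑ c i * O i j = 0`, so moving `p`
along `-c` until a coordinate vanishes gives an optimal strategy of smaller support; a
combination `c` with `∑ c = 0` and `∑ c i * O i j = 1` is a direction in which a small step
stays in the simplex and raises every column payoff, contradicting optimality.
-/

open Function Filter Topology

section Combination

variable {ι κ : Type*} [Fintype ι] [Fintype κ]

theorem exists_support_subset_sum_smul_eq_zero_or_eq (v : ι → κ → ℝ) {s : Set ι}
    (hs : Fintype.card κ ≤ s.ncard) (w : κ → ℝ) :
    ∃ c : ι → ℝ, support c ⊆ s ∧ ((c ≠ 0 ∧ ∑ i, c i • v i = 0) ∨ ∑ i, c i • v i = w) := by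
  have sum_eq (l : ι →₀ ℝ) : Finsupp.linearCombination ℝ v l = ∑ i, l i • v i := by
    rw [Finsupp.linearCombination_apply, Finsupp.sum_fintype _ _ fun i => zero_smul ℝ (v i)]
  have := Fintype.ofFinite s
  by_cases hv : LinearIndepOn ℝ v s
  · have hcard : Fintype.card s = Module.finrank ℝ (κ → ℝ) := by
      refine le_antisymm hv.fintype_card_le_finrank ?_
      rwa [Module.finrank_fintype_fun_eq_card, Set.fintypeCard_eq_ncard]
    have hw : w ∈ Submodule.span ℝ (v '' s) := by
      rw [Set.image_eq_range, hv.span_eq_top_of_card_eq_finrank' hcard]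
      exact Submodule.mem_top
    obtain ⟨l, hl, hlw⟩ := (Finsupp.mem_span_image_iff_linearCombination ℝ).1 hw
    refine ⟨l, ?_, Or.inr ?_⟩
    · rwa [Finsupp.fun_support_eq, ← Finsupp.mem_supported ℝ]
    · rwa [← sum_eq]
  · obtain ⟨l, hl, hl0, hne⟩ := linearDepOn_iff'.1 hv
    refine ⟨l, ?_, Or.inl ⟨?_, ?_⟩⟩
    · rwa [Finsupp.fun_support_eq, ← Finsupp.mem_supported ℝ]
    · exact fun h => hne (DFunLike.coe_injective h)
    · rwa [← sum_eq]

end Combination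

section Perturbation

variable {ι : Type*} [Fintype ι]

theorem exists_nonneg_sub_smul_support_ssubset {p c : ι → ℝ} (hp : 0 ≤ p)
    (hc : support c ⊆ support p) (hc0 : c ≠ 0) (hsum : ∑ i, c i = 0) :
    ∃ t : ℝ, 0 ≤ p - t • c ∧ support (p - t • c) ⊂ support p := by
  obtain ⟨i₁, hi₁⟩ : ∃ i, 0 < c i := by
    by_contra! h
    exact hc0 (funext fun i =>
      (Finset.sum_eq_zero_iff_of_nonpos fun i _ => h i).1 hsum i (Finset.mem_univ i))
  -- the largest step along `-c` that keeps `p` nonnegative is a minimal ratio `p i / c i`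
  obtain ⟨i₀, hi₀, hmin⟩ := Finset.exists_min_image {i | 0 < c i} (fun i => p i / c i)
    ⟨i₁, by simpa using hi₁⟩
  simp only [Finset.mem_filter, Finset.mem_univ, true_and] at hi₀ hmin
  have ht : 0 ≤ p i₀ / c i₀ := div_nonneg (hp i₀) hi₀.le
  refine ⟨p i₀ / c i₀, fun i => ?_, ?_⟩
  · have hti : p i₀ / c i₀ * c i ≤ p i := by
      rcases lt_or_ge 0 (c i) with hci | hci
      · exact (le_div_iff₀ hci).1 (hmin i hci)
      · exact (mul_nonpos_of_nonneg_of_nonpos ht hci).trans (hp i)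
    simpa [sub_nonneg] using hti
  · have hsub : support (p - (p i₀ / c i₀) • c) ⊆ support p :=
      (support_sub _ _).trans (Set.union_subset le_rfl ((support_smul_subset_right _ _).trans hc))
    refine (Set.ssubset_iff_of_subset hsub).2 ⟨i₀, hc hi₀.ne', ?_⟩
    simp [div_mul_cancel₀ _ hi₀.ne']

theorem eventually_add_smul_mem_stdSimplex {p c : ι → ℝ} (hp : p ∈ stdSimplex ℝ ι)
    (hc : support c ⊆ support p) (hsum : ∑ i, c i = 0) :
    ∀ᶠ t in 𝓝 (0 : ℝ), p + t • c ∈ stdSimplex ℝ ι := by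
  have hnonneg (i : ι) : ∀ᶠ t in 𝓝 (0 : ℝ), 0 ≤ p i + t * c i := by
    rcases (hp.1 i).eq_or_lt with h | h
    · have : c i = 0 := notMem_support.1 fun hi => hc hi h.symm
      simp [← h, this]
    · have : Tendsto (fun t : ℝ => p i + t * c i) (𝓝 0) (𝓝 (p i)) := by
        simpa using ((tendsto_id (x := 𝓝 (0 : ℝ))).mul_const (c i)).const_add (p i)
      exact (this.eventually (lt_mem_nhds h)).mono fun _ => le_of_lt
  filter_upwards [eventually_all.2 hnonneg] with t ht
  refine ⟨ht, ?_⟩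
  simp [Finset.sum_add_distrib, ← Finset.mul_sum, hp.2, hsum]

end Perturbation

section Game

variable {m n : ℕ} (O : Fin m → Fin n → ℝ)

theorem minPay_le (p : Fin m → ℝ) (j : Fin n) : minPay O p ≤ ∑ i, p i * O i j :=
  ciInf_le (Set.finite_range _).bddBelow j

theorem minPay_lt_minPay [Nonempty (Fin n)] {p q : Fin m → ℝ}
    (h : ∀ j, ∑ i, p i * O i j < ∑ i, q i * O i j) : minPay O p < minPay O q := by
  obtain ⟨j, hj⟩ := exists_eq_ciInf_of_finite (f := fun j => ∑ i, q i * O i j)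
  calc minPay O p ≤ ∑ i, p i * O i j := minPay_le O p j
    _ < ∑ i, q i * O i j := h j
    _ = minPay O q := hj

theorem continuous_minPay [Nonempty (Fin n)] : Continuous (minPay O) := by
  have : minPay O = fun p => Finset.univ.inf' Finset.univ_nonempty fun j => ∑ i, p i * O i j := by
    funext p
    rw [minPay, Finset.inf'_univ_eq_ciInf]
  rw [this]
  exact Continuous.finset_inf'_apply _ fun j _ => by fun_prop

theorem exists_isMaxOn_minPay [Nonempty (Fin m)] [Nonempty (Fin n)] :
    ∃ p ∈ stdSimplex ℝ (Fin m), IsMaxOn (minPay O) (stdSimplex ℝ (Fin m)) p :=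
  (isCompact_stdSimplex ℝ (Fin m)).exists_isMaxOn
    ⟨_, single_mem_stdSimplex ℝ (Classical.arbitrary _)⟩ (continuous_minPay O).continuousOn

theorem gameVal_eq_of_isMaxOn {p : Fin m → ℝ} (hp : p ∈ stdSimplex ℝ (Fin m))
    (hmax : IsMaxOn (minPay O) (stdSimplex ℝ (Fin m)) p) : gameVal O = minPay O p := by
  have hle (q : {p // p ∈ stdSimplex ℝ (Fin m)}) : minPay O q.1 ≤ minPay O p := hmax q.2
  have : Nonempty {p // p ∈ stdSimplex ℝ (Fin m)} := ⟨⟨p, hp⟩⟩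
  exact le_antisymm (ciSup_le hle) (le_ciSup ⟨minPay O p, Set.forall_mem_range.2 hle⟩ ⟨p, hp⟩)

theorem exists_isMaxOn_minPay_support_ssubset {p c : Fin m → ℝ} (hp : p ∈ stdSimplex ℝ (Fin m))
    (hmax : IsMaxOn (minPay O) (stdSimplex ℝ (Fin m)) p) (hc : support c ⊆ support p)
    (hc0 : c ≠ 0) (hsum : ∑ i, c i = 0) (hpay : ∀ j, ∑ i, c i * O i j = 0) :
    ∃ q ∈ stdSimplex ℝ (Fin m), IsMaxOn (minPay O) (stdSimplex ℝ (Fin m)) q ∧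
      support q ⊂ support p := by
  obtain ⟨t, hnonneg, hsupp⟩ := exists_nonneg_sub_smul_support_ssubset hp.1 hc hc0 hsum
  have hq : p - t • c ∈ stdSimplex ℝ (Fin m) :=
    ⟨hnonneg, by simp [Finset.sum_sub_distrib, ← Finset.mul_sum, hp.2, hsum]⟩
  have hsame : minPay O (p - t • c) = minPay O p := by
    simp [minPay, sub_mul, Finset.sum_sub_distrib, mul_assoc, ← Finset.mul_sum, hpay]
  exact ⟨_, hq, fun q hq' => (hmax hq').trans_eq hsame.symm, hsupp⟩

theorem not_isMaxOn_minPay [Nonempty (Fin n)] {p c : Fin m → ℝ} (hp : p ∈ stdSimplex ℝ (Fin m))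
    (hc : support c ⊆ support p) (hsum : ∑ i, c i = 0) (hpay : ∀ j, 0 < ∑ i, c i * O i j) :
    ¬ IsMaxOn (minPay O) (stdSimplex ℝ (Fin m)) p := by
  obtain ⟨t, hq, ht⟩ := ((eventually_add_smul_mem_stdSimplex hp hc hsum).filter_mono
    nhdsWithin_le_nhds |>.and (self_mem_nhdsWithin (s := Set.Ioi 0))).exists
  refine fun hmax => (hmax hq).not_gt (minPay_lt_minPay O fun j => ?_)
  have := mul_pos (Set.mem_Ioi.1 ht) (hpay j)
  simp only [Pi.add_apply, Pi.smul_apply, smul_eq_mul, add_mul, Finset.sum_add_distrib, mul_assoc,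
    ← Finset.mul_sum]
  linarith

theorem sum_smul_cons_one (c : Fin m → ℝ) :
    ∑ i, c i • (Fin.cons 1 (O i) : Fin (n + 1) → ℝ) =
      Fin.cons (∑ i, c i) fun j => ∑ i, c i * O i j := by
  ext k
  refine Fin.cases ?_ (fun j => ?_) k <;> simp [Finset.sum_apply]

theorem ncard_support_le_of_isMaxOn_minPay [Nonempty (Fin n)] {p : Fin m → ℝ}
    (hp : p ∈ stdSimplex ℝ (Fin m)) (hmax : IsMaxOn (minPay O) (stdSimplex ℝ (Fin m)) p)
    (hmin : ∀ q ∈ stdSimplex ℝ (Fin m), IsMaxOn (minPay O) (stdSimplex ℝ (Fin m)) q →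
      ¬ support q ⊂ support p) :
    (support p).ncard ≤ n := by
  by_contra! hlt
  obtain ⟨c, hc, ⟨hc0, hdep⟩ | hspan⟩ := exists_support_subset_sum_smul_eq_zero_or_eq
    (fun i => (Fin.cons 1 (O i) : Fin (n + 1) → ℝ)) (by simpa using hlt) (Fin.cons 0 fun _ => 1)
  · rw [sum_smul_cons_one] at hdep
    obtain ⟨hsum, hpay⟩ := Matrix.cons_eq_zero_iff.1 hdep
    obtain ⟨q, hq, hqmax, hqp⟩ :=
      exists_isMaxOn_minPay_support_ssubset O hp hmax hc hc0 hsum (congrFun hpay)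
    exact hmin q hq hqmax hqp
  · rw [sum_smul_cons_one, Fin.cons_inj, funext_iff] at hspan
    exact not_isMaxOn_minPay O hp hc hspan.1 (fun j => by simp [hspan.2 j]) hmax

end Game

/-- (Proposition 1, support form) There is an optimal mixed strategy for the row
player whose support has size at most `n`. -/
theorem exists_optimal_strategy_small_support {m n : ℕ} (hm : 1 ≤ m) (hn : 1 ≤ n)
    (O : Fin m → Fin n → ℝ) :
    ∃ p : Fin m → ℝ, p ∈ stdSimplex ℝ (Fin m) ∧ minPay O p = gameVal O ∧
      {i : Fin m | p i ≠ 0}.ncard ≤ n := by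
  have : Nonempty (Fin m) := ⟨⟨0, hm⟩⟩
  have : Nonempty (Fin n) := ⟨⟨0, hn⟩⟩
  obtain ⟨p, ⟨hp, hmax⟩, hmin⟩ := (measure fun p : Fin m → ℝ => (support p).ncard).wf.has_min
    {p | p ∈ stdSimplex ℝ (Fin m) ∧ IsMaxOn (minPay O) (stdSimplex ℝ (Fin m)) p}
    (exists_isMaxOn_minPay O)
  refine ⟨p, hp, (gameVal_eq_of_isMaxOn O hp hmax).symm,
    ncard_support_le_of_isMaxOn_minPay O hp hmax fun q hq hqmax hqp =>
      hmin q ⟨hq, hqmax⟩ (Set.ncard_lt_ncard hqp)⟩
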